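/- There is no group homomorphism φ : ℤ⁵ → ℤ⁵ embedding the bilinear form G ⊕ [-87], where G = [[-3,1,1,0],[1,-3,0,1],[1,0,-3,1],[0,1,1,-5]], into the standard negative definite form -Id on ℤ⁵. -/
import Mathlib

open Matrix

abbrev T5 := Int × Int × Int × Int × Int

def dot5 (u v : T5) : Int :=
  u.1*v.1 + u.2.1*v.2.1 + u.2.2.1*v.2.2.1 + u.2.2.2.1*v.2.2.2.1 + u.2.2.2.2*v.2.2.2.2

def prodL (r : List Int) : List T5 :=
  r.flatMap fun a => r.flatMap fun b => r.flatMap fun c => r.flatMap fun d =>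
    r.map fun e => (a,b,c,d,e)

def cand3 : List T5 := (prodL [-1,0,1]).filter fun v => dot5 v v == 3
def cand5 : List T5 := (prodL [-2,-1,0,1,2]).filter fun v => dot5 v v == 5

def check (v1 : T5) : Bool :=
  cand3.all fun v2 =>
    dot5 v1 v2 != -1 ||
    cand5.all fun v4 =>
      dot5 v1 v4 != 0 || dot5 v2 v4 != -1 ||
      cand3.all fun v3 =>
        dot5 v1 v3 != -1 || dot5 v2 v3 != 0 || dot5 v3 v4 != -1

theorem all_split (l : List T5) (n : Nat) (h1 : (l.take n).all check = true)
    (h2 : (l.drop n).all check = true) : l.all check = true := by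
  rw [← List.take_append_drop n l, List.all_append, h1, h2]; rfl

set_option maxRecDepth 100000 in
set_option maxHeartbeats 4000000 in
theorem key : cand3.all check = true := by
  refine all_split _ 8 (by decide) ?_
  refine all_split _ 8 (by decide) ?_
  refine all_split _ 8 (by decide) ?_
  refine all_split _ 8 (by decide) ?_
  refine all_split _ 8 (by decide) ?_
  refine all_split _ 8 (by decide) ?_
  refine all_split _ 8 (by decide) ?_
  refine all_split _ 8 (by decide) ?_
  refine all_split _ 8 (by decide) ?_
  decide

theorem bnd3 {a : ℤ} (h : a*a ≤ 3) : a ∈ ([-1,0,1] : List ℤ) := by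
  have h1 : -1 ≤ a := by nlinarith
  have h2 : a ≤ 1 := by nlinarith
  simp; omega

theorem bnd5 {a : ℤ} (h : a*a ≤ 5) : a ∈ ([-2,-1,0,1,2] : List ℤ) := by
  have h1 : -2 ≤ a := by nlinarith
  have h2 : a ≤ 2 := by nlinarith
  simp; omega

theorem mem_prodL {r : List ℤ} {a b c d e : ℤ} (ha : a ∈ r) (hb : b ∈ r)
    (hc : c ∈ r) (hd : d ∈ r) (he : e ∈ r) : ((a,b,c,d,e) : T5) ∈ prodL r := by
  simp only [prodL, List.mem_flatMap, List.mem_map]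
  exact ⟨a, ha, b, hb, c, hc, d, hd, ⟨e, he, rfl⟩⟩

theorem mem_cand3 {t : T5} (h : dot5 t t = 3) : t ∈ cand3 := by
  obtain ⟨a,b,c,d,e⟩ := t
  simp only [dot5] at h
  refine List.mem_filter.mpr ⟨mem_prodL (bnd3 ?_) (bnd3 ?_) (bnd3 ?_) (bnd3 ?_) (bnd3 ?_),
    by simp [dot5]; omega⟩ <;> nlinarith [mul_self_nonneg a, mul_self_nonneg b,
      mul_self_nonneg c, mul_self_nonneg d, mul_self_nonneg e]

theorem mem_cand5 {t : T5} (h : dot5 t t = 5) : t ∈ cand5 := by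
  obtain ⟨a,b,c,d,e⟩ := t
  simp only [dot5] at h
  refine List.mem_filter.mpr ⟨mem_prodL (bnd5 ?_) (bnd5 ?_) (bnd5 ?_) (bnd5 ?_) (bnd5 ?_),
    by simp [dot5]; omega⟩ <;> nlinarith [mul_self_nonneg a, mul_self_nonneg b,
      mul_self_nonneg c, mul_self_nonneg d, mul_self_nonneg e]

theorem stmt_16 :
    ¬ ∃ φ : (Fin 5 → ℤ) →+ (Fin 5 → ℤ),
      ∀ x y : Fin 5 → ℤ,
        -((φ x) ⬝ᵥ (φ y)) =
          x ⬝ᵥ ((!![-3, 1, 1, 0, 0;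
      1, -3, 0, 1, 0;
      1, 0, -3, 1, 0;
      0, 1, 1, -5, 0;
      0, 0, 0, 0, -87] : Matrix (Fin 5) (Fin 5) ℤ) *ᵥ y) := by
  rintro ⟨φ, h⟩
  set e1 : Fin 5 → ℤ := ![1,0,0,0,0] with he1
  set e2 : Fin 5 → ℤ := ![0,1,0,0,0] with he2
  set e3 : Fin 5 → ℤ := ![0,0,1,0,0] with he3
  set e4 : Fin 5 → ℤ := ![0,0,0,1,0] with he4
  have h11 := h e1 e1
  have h22 := h e2 e2
  have h33 := h e3 e3
  have h44 := h e4 e4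
  have h12 := h e1 e2
  have h13 := h e1 e3
  have h14 := h e1 e4
  have h23 := h e2 e3
  have h24 := h e2 e4
  have h34 := h e3 e4
  simp only [he1, he2, he3, he4, Matrix.mulVec, dotProduct, Fin.sum_univ_five,
    Matrix.cons_val_zero, Matrix.cons_val_one, Matrix.head_cons, Matrix.cons_val_two,
    Matrix.tail_cons, Matrix.cons_val_three, Matrix.cons_val_four, Matrix.cons_val',
    Matrix.cons_val_fin_one, Matrix.empty_val', one_mul, zero_mul, mul_one, mul_zero,
    add_zero, zero_add, Matrix.of_apply] at h11 h22 h33 h44 h12 h13 h14 h23 h24 h34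
  set w1 := φ e1
  set w2 := φ e2
  set w3 := φ e3
  set w4 := φ e4
  set t1 : T5 := (w1 0, w1 1, w1 2, w1 3, w1 4) with ht1
  set t2 : T5 := (w2 0, w2 1, w2 2, w2 3, w2 4) with ht2
  set t3 : T5 := (w3 0, w3 1, w3 2, w3 3, w3 4) with ht3
  set t4 : T5 := (w4 0, w4 1, w4 2, w4 3, w4 4) with ht4
  have m1 : t1 ∈ cand3 := mem_cand3 (by simp only [dot5, ht1]; linarith)
  have m2 : t2 ∈ cand3 := mem_cand3 (by simp only [dot5, ht2]; linarith)
  have m3 : t3 ∈ cand3 := mem_cand3 (by simp only [dot5, ht3]; linarith)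
  have m4 : t4 ∈ cand5 := mem_cand5 (by simp only [dot5, ht4]; linarith)
  have d12 : dot5 t1 t2 = -1 := by simp only [dot5, ht1, ht2]; linarith
  have d13 : dot5 t1 t3 = -1 := by simp only [dot5, ht1, ht3]; linarith
  have d14 : dot5 t1 t4 = 0 := by simp only [dot5, ht1, ht4]; linarith
  have d23 : dot5 t2 t3 = 0 := by simp only [dot5, ht2, ht3]; linarith
  have d24 : dot5 t2 t4 = -1 := by simp only [dot5, ht2, ht4]; linarith
  have d34 : dot5 t3 t4 = -1 := by simp only [dot5, ht3, ht4]; linarith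
  have k1 := List.all_eq_true.mp key t1 m1
  rw [check, List.all_eq_true] at k1
  have k2 := k1 t2 m2
  simp only [Bool.or_eq_true, bne_iff_ne, ne_eq, d12, not_true_eq_false, false_or,
    List.all_eq_true] at k2
  have k4 := k2 t4 m4
  simp only [Bool.or_eq_true, bne_iff_ne, ne_eq, d14, d24, not_true_eq_false, false_or,
    List.all_eq_true] at k4
  have k3 := k4 t3 m3
  simp only [Bool.or_eq_true, bne_iff_ne, ne_eq, d13, d23, d34, not_true_eq_false,
    false_or] at k3
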